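/- Let ρ : V∖{0} → R be an 𝔽_q-reciprocal map, V' ⊆ V an 𝔽_q-subspace, and v ∈ V∖V'. Then the following identities hold in R: (a) (Σ_{v'∈V'} ρ(v−v')) · (∏_{v'∈V'∖{0}} ρ(v')) = ∏_{v'∈V'} ρ(v−v'); (b) (Σ_{v'∈V'} ρ(v−v')) · (∏_{v'∈V'∖{0}} (ρ(v) − ρ(v'))) = ρ(v)^{|V'|}, where |V'| is the cardinality of V'; (c) if ρ(v) is a unit of R, then (Σ_{v'∈V'} ρ(v−v')) · e_{ρ|V'}(ρ(v)^{−1}) = 1. (Proposition 1.18 of the paper.) -/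
import Mathlib


noncomputable section

/-- An `𝔽_q`-reciprocal map `V∖{0} → R` (encoded as a total function whose value at `0`
is irrelevant): (a) `ρ(v)ρ(w) = ρ(v+w)(ρ(v)+ρ(w))` whenever `v, w, v+w ≠ 0`, and
(b) `α ρ(αv) = ρ(v)` for all `α ∈ 𝔽_q^×` and `v ≠ 0`. -/
def IsFqRecip (Fq : Type) [Field Fq] {V R : Type} [AddCommGroup V] [Module Fq V]
    [CommRing R] [Algebra Fq R] (ρ : V → R) : Prop :=
  (∀ v w : V, v ≠ 0 → w ≠ 0 → v + w ≠ 0 → ρ v * ρ w = ρ (v + w) * (ρ v + ρ w)) ∧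
  (∀ (α : Fqˣ) (v : V), v ≠ 0 →
    algebraMap Fq R (α : Fq) * ρ ((α : Fq) • v) = ρ v)

/-- The polynomial `e_ρ(X) = X ⬝ ∏_{v ∈ V∖{0}} (1 - ρ(v) X) ∈ R[X]`. -/
def eRho {Fq V R : Type} [Field Fq] [AddCommGroup V] [Module Fq V]
    [CommRing R] [Algebra Fq R] (ρ : V → R) : Polynomial R :=
  Polynomial.X * ∏ᶠ v ∈ {v : V | v ≠ 0}, (1 - Polynomial.C (ρ v) * Polynomial.X)

/-- The polynomial `e_{ρ|V'}(X) = X ⬝ ∏_{v' ∈ V'∖{0}} (1 - ρ(v') X) ∈ R[X]`. -/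
def eRhoSub {Fq V R : Type} [Field Fq] [AddCommGroup V] [Module Fq V]
    [CommRing R] [Algebra Fq R] (V' : Submodule Fq V) (ρ : V → R) : Polynomial R :=
  Polynomial.X * ∏ᶠ v ∈ {v : V | v ∈ V' ∧ v ≠ 0}, (1 - Polynomial.C (ρ v) * Polynomial.X)

section Aux

variable {Fq : Type} [Field Fq] {V R : Type} [AddCommGroup V] [Module Fq V]
    [CommRing R] [Algebra Fq R] {ρ : V → R}

lemma IsFqRecip.neg (h : IsFqRecip Fq ρ) {x : V} (hx : x ≠ 0) : ρ (-x) = -ρ x := by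
  have h2 := h.2 (-1) x hx
  rw [Units.val_neg, Units.val_one, map_neg, map_one, neg_one_smul, neg_one_mul] at h2
  rw [← h2, neg_neg]

lemma IsFqRecip.rel2 (h : IsFqRecip Fq ρ) {x w t : V} (hxw : x ≠ w) (hwt : w ≠ t)
    (hxt : x ≠ t) :
    ρ (x - w) * ρ (w - t) = ρ (x - t) * (ρ (x - w) + ρ (w - t)) := by
  have h1 := h.1 (x - w) (w - t) (sub_ne_zero_of_ne hxw) (sub_ne_zero_of_ne hwt)
    (by rw [sub_add_sub_cancel]; exact sub_ne_zero_of_ne hxt)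
  rwa [sub_add_sub_cancel] at h1

/-- The key "partial fraction" identity, proved by induction over finite sets. -/
lemma IsFqRecip.bgen [DecidableEq V] (h : IsFqRecip Fq ρ) (T : Finset V) :
    ∀ x : V, x ∉ T → ∀ r : R,
      ∏ w ∈ T, (r - ρ (x - w)) =
        r ^ T.card - ∑ w ∈ T, ρ (x - w) * ∏ w' ∈ T.erase w, (r - ρ (w - w')) := by
  induction T using Finset.induction_on with
  | empty => intro x _ r; simp
  | @insert t T htT ih =>
    intro x hx r
    have hxt : x ≠ t := by rintro rfl; exact hx (Finset.mem_insert_self x T)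
    have hxT : x ∉ T := fun hmem => hx (Finset.mem_insert_of_mem hmem)
    have hconv : ∀ w ∈ T, ρ (x - w) * ∏ w' ∈ (insert t T).erase w, (r - ρ (w - w')) =
        r * (ρ (x - w) * ∏ w' ∈ T.erase w, (r - ρ (w - w')))
          - ρ (x - t) * (ρ (x - w) * ∏ w' ∈ T.erase w, (r - ρ (w - w')))
          + ρ (x - t) * (ρ (t - w) * ∏ w' ∈ T.erase w, (r - ρ (w - w'))) := by
      intro w hw
      have htw : t ≠ w := fun e => htT (e ▸ hw)
      have hxw : x ≠ w := fun e => hxT (e ▸ hw)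
      rw [Finset.erase_insert_of_ne htw,
        Finset.prod_insert (fun hmem => htT (Finset.mem_of_mem_erase hmem))]
      have hr2 := h.rel2 hxw htw.symm hxt
      have hne : ρ (t - w) = -ρ (w - t) := by
        rw [← neg_sub w t]; exact h.neg (sub_ne_zero_of_ne htw.symm)
      linear_combination (-(∏ w' ∈ T.erase w, (r - ρ (w - w')))) * hr2 +
        (-(ρ (x - t) * ∏ w' ∈ T.erase w, (r - ρ (w - w')))) * hne
    have hsum : ∑ w ∈ T, ρ (x - w) * ∏ w' ∈ (insert t T).erase w, (r - ρ (w - w')) =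
        r * ∑ w ∈ T, ρ (x - w) * ∏ w' ∈ T.erase w, (r - ρ (w - w'))
        - ρ (x - t) * ∑ w ∈ T, ρ (x - w) * ∏ w' ∈ T.erase w, (r - ρ (w - w'))
        + ρ (x - t) * ∑ w ∈ T, ρ (t - w) * ∏ w' ∈ T.erase w, (r - ρ (w - w')) := by
      rw [Finset.sum_congr rfl hconv, Finset.sum_add_distrib, Finset.sum_sub_distrib,
        ← Finset.mul_sum, ← Finset.mul_sum, ← Finset.mul_sum]
    rw [Finset.prod_insert htT, Finset.sum_insert htT, Finset.erase_insert htT,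
      Finset.card_insert_of_notMem htT, hsum, ih x hxT r, ih t htT r]
    ring

end Aux

/-- **Proposition 1.18**: identities for an `𝔽_q`-reciprocal map `ρ`, an `𝔽_q`-subspace
`V' ⊆ V` and `v ∈ V∖V'`. -/
theorem statement18 (Fq : Type) [Field Fq] [Fintype Fq]
    (V : Type) [AddCommGroup V] [Module Fq V] [FiniteDimensional Fq V]
    (R : Type) [CommRing R] [Algebra Fq R]
    (ρ : V → R) (h : IsFqRecip Fq ρ)
    (V' : Submodule Fq V) (v : V) (hv : v ∉ V') :
    -- (a)
    ((∑ᶠ v' ∈ (V' : Set V), ρ (v - v')) * (∏ᶠ v' ∈ {x : V | x ∈ V' ∧ x ≠ 0}, ρ v')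
      = ∏ᶠ v' ∈ (V' : Set V), ρ (v - v')) ∧
    -- (b)
    ((∑ᶠ v' ∈ (V' : Set V), ρ (v - v')) * (∏ᶠ v' ∈ {x : V | x ∈ V' ∧ x ≠ 0}, (ρ v - ρ v'))
      = ρ v ^ (Nat.card V')) ∧
    -- (c)
    (IsUnit (ρ v) →
      (∑ᶠ v' ∈ (V' : Set V), ρ (v - v')) *
        Polynomial.eval (Ring.inverse (ρ v)) (eRhoSub (Fq := Fq) V' ρ) = 1) := by
  classical
  have hfinV : Finite V := Module.finite_of_finite Fq
  letI : Fintype V := Fintype.ofFinite V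
  -- Finset versions of the two index sets
  have hvTv : v ∉ (V' : Set V).toFinset := by
    rw [Set.mem_toFinset]; exact hv
  have h0Tv : (0 : V) ∈ (V' : Set V).toFinset := by
    rw [Set.mem_toFinset]; exact V'.zero_mem
  have hmem : ∀ w ∈ (V' : Set V).toFinset, w ∈ V' := by
    intro w hw; rwa [Set.mem_toFinset] at hw
  have hT0e : ({x : V | x ∈ V' ∧ x ≠ 0} : Set V).toFinset
      = ((V' : Set V).toFinset).erase 0 := by
    ext x
    simp only [Set.mem_toFinset, Set.mem_setOf_eq, Finset.mem_erase, SetLike.mem_coe]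
    tauto
  have hpos : 0 < ((V' : Set V).toFinset).card := Finset.card_pos.2 ⟨0, h0Tv⟩
  have hcardTv : ((V' : Set V).toFinset).card
      = ({x : V | x ∈ V' ∧ x ≠ 0} : Set V).toFinset.card + 1 := by
    rw [hT0e, Finset.card_erase_of_mem h0Tv]
    omega
  have hncard : Nat.card ↥V' = ((V' : Set V).toFinset).card := by
    rw [Set.toFinset_card]
    exact Nat.card_eq_fintype_card
  -- conversions between finprod/finsum over sets and Finset products/sums
  have hsumS : (∑ᶠ v' ∈ (V' : Set V), ρ (v - v'))
      = ∑ w ∈ (V' : Set V).toFinset, ρ (v - w) := by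
    rw [← finsum_mem_coe_finset, Set.coe_toFinset]
  have hprodS : (∏ᶠ v' ∈ (V' : Set V), ρ (v - v'))
      = ∏ w ∈ (V' : Set V).toFinset, ρ (v - w) := by
    rw [← finprod_mem_coe_finset, Set.coe_toFinset]
  have hprod0 : (∏ᶠ v' ∈ {x : V | x ∈ V' ∧ x ≠ 0}, ρ v')
      = ∏ w ∈ ({x : V | x ∈ V' ∧ x ≠ 0} : Set V).toFinset, ρ w := by
    rw [← finprod_mem_coe_finset, Set.coe_toFinset]
  have hprodD : (∏ᶠ v' ∈ {x : V | x ∈ V' ∧ x ≠ 0}, (ρ v - ρ v'))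
      = ∏ w ∈ ({x : V | x ∈ V' ∧ x ≠ 0} : Set V).toFinset, (ρ v - ρ w) := by
    rw [← finprod_mem_coe_finset, Set.coe_toFinset]
  have hprodP : (∏ᶠ x ∈ {x : V | x ∈ V' ∧ x ≠ 0},
        (1 - Polynomial.C (ρ x) * Polynomial.X))
      = ∏ w ∈ ({x : V | x ∈ V' ∧ x ≠ 0} : Set V).toFinset,
        (1 - Polynomial.C (ρ w) * Polynomial.X) := by
    rw [← finprod_mem_coe_finset, Set.coe_toFinset]
  -- reindexing products over `Tv.erase w` by `w' ↦ w - w'`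
  have hre : ∀ w ∈ (V' : Set V).toFinset, ∀ f : V → R,
      ∏ w' ∈ ((V' : Set V).toFinset).erase w, f (w - w')
        = ∏ u ∈ ({x : V | x ∈ V' ∧ x ≠ 0} : Set V).toFinset, f u := by
    intro w hw f
    refine Finset.prod_bij' (fun w' _ => w - w') (fun u _ => w - u) ?_ ?_ ?_ ?_ ?_
    · intro w' hw'
      rw [Set.mem_toFinset, Set.mem_setOf_eq]
      exact ⟨sub_mem (hmem w hw) (hmem w' (Finset.mem_of_mem_erase hw')),
        sub_ne_zero_of_ne (Finset.ne_of_mem_erase hw').symm⟩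
    · intro u hu
      rw [Set.mem_toFinset, Set.mem_setOf_eq] at hu
      rw [Finset.mem_erase, Set.mem_toFinset]
      constructor
      · rw [Ne, sub_eq_self]; exact hu.2
      · exact sub_mem (hmem w hw) hu.1
    · intro w' _; exact sub_sub_cancel w w'
    · intro u _; exact sub_sub_cancel w u
    · intro w' _; rfl
  -- the master identity, specialized from `bgen`
  have hmaster : ∀ r : R,
      ∏ w ∈ (V' : Set V).toFinset, (r - ρ (v - w))
        = r ^ ((V' : Set V).toFinset).card
          - (∑ w ∈ (V' : Set V).toFinset, ρ (v - w)) *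
            ∏ u ∈ ({x : V | x ∈ V' ∧ x ≠ 0} : Set V).toFinset, (r - ρ u) := by
    intro r
    rw [h.bgen ((V' : Set V).toFinset) v hvTv r]
    congr 1
    rw [Finset.sum_mul]
    exact Finset.sum_congr rfl fun w hw => by rw [hre w hw (fun u => r - ρ u)]
  -- item (b) at the Finset level
  have hb : (∑ w ∈ (V' : Set V).toFinset, ρ (v - w)) *
      ∏ u ∈ ({x : V | x ∈ V' ∧ x ≠ 0} : Set V).toFinset, (ρ v - ρ u)
      = ρ v ^ ((V' : Set V).toFinset).card := by
    have hb' := hmaster (ρ v)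
    have hzero : ∏ w ∈ (V' : Set V).toFinset, (ρ v - ρ (v - w)) = 0 :=
      Finset.prod_eq_zero h0Tv (by rw [sub_zero, sub_self])
    linear_combination hb' - hzero
  -- item (a) at the Finset level
  have hA : (∑ w ∈ (V' : Set V).toFinset, ρ (v - w)) *
      ∏ u ∈ ({x : V | x ∈ V' ∧ x ≠ 0} : Set V).toFinset, ρ u
      = ∏ w ∈ (V' : Set V).toFinset, ρ (v - w) := by
    have h0 := hmaster 0
    have hL : ∏ w ∈ (V' : Set V).toFinset, ((0 : R) - ρ (v - w))
        = (-1) ^ ((V' : Set V).toFinset).card * ∏ w ∈ (V' : Set V).toFinset, ρ (v - w) := by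
      rw [← Finset.prod_const (-1 : R), ← Finset.prod_mul_distrib]
      exact Finset.prod_congr rfl fun w _ => by ring
    have hR : ∏ u ∈ ({x : V | x ∈ V' ∧ x ≠ 0} : Set V).toFinset, ((0 : R) - ρ u)
        = (-1) ^ (({x : V | x ∈ V' ∧ x ≠ 0} : Set V).toFinset).card *
          ∏ u ∈ ({x : V | x ∈ V' ∧ x ≠ 0} : Set V).toFinset, ρ u := by
      rw [← Finset.prod_const (-1 : R), ← Finset.prod_mul_distrib]
      exact Finset.prod_congr rfl fun w _ => by ring
    have hzp : (0 : R) ^ ((V' : Set V).toFinset).card = 0 := zero_pow (by omega)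
    rw [hL, hR, hzp, hcardTv] at h0
    set m := (({x : V | x ∈ V' ∧ x ≠ 0} : Set V).toFinset).card with hm
    have h2 : (-1 : R) ^ (m + 1) * (-1 : R) ^ (m + 1) = 1 := by
      rw [← pow_add]
      exact Even.neg_one_pow ⟨m + 1, by ring⟩
    have h3 : (-1 : R) ^ (m + 1) * (-1 : R) ^ m = -1 := by
      rw [← pow_add]
      exact Odd.neg_one_pow ⟨m, by ring⟩
    linear_combination (-(-1 : R) ^ (m + 1)) * h0 +
      (∏ w ∈ (V' : Set V).toFinset, ρ (v - w)) * h2 +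
      ((∑ w ∈ (V' : Set V).toFinset, ρ (v - w)) *
        ∏ u ∈ ({x : V | x ∈ V' ∧ x ≠ 0} : Set V).toFinset, ρ u) * h3
  refine ⟨?_, ?_, ?_⟩
  · rw [hsumS, hprod0, hprodS]; exact hA
  · rw [hsumS, hprodD, hncard]; exact hb
  · intro hu
    have hinv : ρ v * Ring.inverse (ρ v) = 1 := Ring.mul_inverse_cancel _ hu
    have heval : Polynomial.eval (Ring.inverse (ρ v)) (eRhoSub (Fq := Fq) V' ρ) =
        Ring.inverse (ρ v) *
          ∏ u ∈ ({x : V | x ∈ V' ∧ x ≠ 0} : Set V).toFinset, (1 - ρ u * Ring.inverse (ρ v)) := by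
      rw [eRhoSub, hprodP, Polynomial.eval_mul, Polynomial.eval_X, Polynomial.eval_prod]
      congr 1
      exact Finset.prod_congr rfl fun u _ => by simp
    have hconv : ∏ u ∈ ({x : V | x ∈ V' ∧ x ≠ 0} : Set V).toFinset,
        (1 - ρ u * Ring.inverse (ρ v)) =
        (∏ u ∈ ({x : V | x ∈ V' ∧ x ≠ 0} : Set V).toFinset, (ρ v - ρ u)) *
          Ring.inverse (ρ v) ^ (({x : V | x ∈ V' ∧ x ≠ 0} : Set V).toFinset).card := by
      rw [← Finset.prod_const (Ring.inverse (ρ v)), ← Finset.prod_mul_distrib]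
      exact Finset.prod_congr rfl fun u _ => by rw [sub_mul, hinv]
    rw [hsumS, heval, hconv]
    have hfin : (∑ w ∈ (V' : Set V).toFinset, ρ (v - w)) *
        (Ring.inverse (ρ v) *
          ((∏ u ∈ ({x : V | x ∈ V' ∧ x ≠ 0} : Set V).toFinset, (ρ v - ρ u)) *
            Ring.inverse (ρ v) ^ (({x : V | x ∈ V' ∧ x ≠ 0} : Set V).toFinset).card)) =
        ((∑ w ∈ (V' : Set V).toFinset, ρ (v - w)) *
          ∏ u ∈ ({x : V | x ∈ V' ∧ x ≠ 0} : Set V).toFinset, (ρ v - ρ u)) *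
          Ring.inverse (ρ v) ^
            ((({x : V | x ∈ V' ∧ x ≠ 0} : Set V).toFinset).card + 1) := by
      ring
    rw [hfin, hb, hcardTv, ← mul_pow, hinv, one_pow]

end
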